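/- arXiv:2211.00322 — 2 statements merged into one kernel-verified Lean document; each statement's English description precedes it below -/
import Mathlib

section
/- Let x₀, x₀', xₐ be points in ℝⁿ and let σ > 0 and p₀, p₀' > 0 be real numbers. Then p₀ · exp(-‖x₀ - xₐ‖² / (2σ²)) > p₀' · exp(-‖x₀' - xₐ‖² / (2σ²)) if and only if ⟪xₐ - x₀, x₀' - x₀⟫ < σ² · log(p₀ / p₀') + ‖x₀' - x₀‖² / 2. -/
theorem stmt_0 (n : ℕ) (x₀ x₀' xₐ : EuclideanSpace ℝ (Fin n)) (σ p₀ p₀' : ℝ)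
    (hσ : 0 < σ) (hp₀ : 0 < p₀) (hp₀' : 0 < p₀') :
    p₀ * Real.exp (-‖x₀ - xₐ‖ ^ 2 / (2 * σ ^ 2)) >
      p₀' * Real.exp (-‖x₀' - xₐ‖ ^ 2 / (2 * σ ^ 2)) ↔
    (inner ℝ (xₐ - x₀) (x₀' - x₀) : ℝ) < σ ^ 2 * Real.log (p₀ / p₀') + ‖x₀' - x₀‖ ^ 2 / 2 := by
  have hσ2 : (0:ℝ) < σ ^ 2 := by positivity
  have hnorm : ‖x₀' - xₐ‖ ^ 2
      = ‖x₀' - x₀‖ ^ 2 - 2 * (inner ℝ (xₐ - x₀) (x₀' - x₀) : ℝ) + ‖x₀ - xₐ‖ ^ 2 := by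
    have h1 : x₀' - xₐ = (x₀' - x₀) - (xₐ - x₀) := by abel
    have h2 : x₀ - xₐ = -(xₐ - x₀) := by abel
    rw [h1, h2, norm_neg, @norm_sub_sq_real, real_inner_comm]
  have key : ∀ A B L₁ L₂ : ℝ, L₁ + A / (2 * σ ^ 2) < L₂ + B / (2 * σ ^ 2) ↔
      A - B < (L₂ - L₁) * (2 * σ ^ 2) := by
    intro A B L₁ L₂
    rw [show L₁ + A / (2 * σ ^ 2) = A / (2 * σ ^ 2) + L₁ from add_comm _ _,
      ← sub_lt_sub_iff, div_sub_div_same, div_lt_iff₀ (by positivity)]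
  rw [gt_iff_lt, ← Real.log_lt_log_iff (by positivity),
    Real.log_mul hp₀'.ne' (Real.exp_pos _).ne',
    Real.log_mul hp₀.ne' (Real.exp_pos _).ne',
    Real.log_exp, Real.log_exp, Real.log_div hp₀.ne' hp₀'.ne', hnorm, key]
  · constructor <;> intro h <;> nlinarith [h, hσ2]
  · positivity
end

section
/- Let X be a finite set of points in ℝⁿ partitioned by labels via a function f : ℝⁿ → ℕ, let σ > 0, p : X → ℝ positive, xₐ ∈ ℝⁿ, and φ(x) := p(x)·exp(-‖x - xₐ‖²/(2σ²)). Fix x₀ ∈ X. Suppose there exists x̃₀ ∈ X with f(x̃₀) = f(x₀) such that for every x' ∈ X with f(x') ≠ f(x₀) we have ⟪xₐ - x̃₀, x' - x̃₀⟫ < σ² log(p(x̃₀)/p(x')) + ‖x' - x̃₀‖²/2. Then any maximizer y ∈ X of φ (i.e., φ(y) ≥ φ(x) for all x ∈ X) satisfies f(y) = f(x₀). -/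
theorem stmt_8 (n : ℕ) (X : Finset (EuclideanSpace ℝ (Fin n)))
    (f : EuclideanSpace ℝ (Fin n) → ℕ)
    (σ : ℝ) (hσ : 0 < σ) (p : EuclideanSpace ℝ (Fin n) → ℝ) (hp : ∀ x ∈ X, 0 < p x)
    (xₐ : EuclideanSpace ℝ (Fin n))
    (φ : EuclideanSpace ℝ (Fin n) → ℝ)
    (hφ : ∀ x, φ x = p x * Real.exp (-‖x - xₐ‖ ^ 2 / (2 * σ ^ 2)))
    (x₀ : EuclideanSpace ℝ (Fin n)) (hx₀ : x₀ ∈ X)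
    (xt₀ : EuclideanSpace ℝ (Fin n)) (hxt₀ : xt₀ ∈ X) (hlabel : f xt₀ = f x₀)
    (hhalf : ∀ x' ∈ X, f x' ≠ f x₀ →
      (inner ℝ (xₐ - xt₀) (x' - xt₀) : ℝ) < σ ^ 2 * Real.log (p xt₀ / p x') + ‖x' - xt₀‖ ^ 2 / 2) :
    ∀ y ∈ X, (∀ x ∈ X, φ x ≤ φ y) → f y = f x₀ := by
  intro y hy hmax
  by_contra hne
  have hpy := hp y hy
  have hpt := hp xt₀ hxt₀
  have h1 := hhalf y hy hne
  have hmax' := hmax xt₀ hxt₀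
  have hlog : Real.log (p xt₀ / p y) = Real.log (p xt₀) - Real.log (p y) :=
    Real.log_div (ne_of_gt hpt) (ne_of_gt hpy)
  rw [hlog] at h1
  have hid : ‖y - xₐ‖ ^ 2
      = ‖y - xt₀‖ ^ 2 - 2 * (inner ℝ (xₐ - xt₀) (y - xt₀) : ℝ) + ‖xt₀ - xₐ‖ ^ 2 := by
    have h : y - xₐ = (y - xt₀) - (xₐ - xt₀) := by abel
    rw [h, norm_sub_sq_real, real_inner_comm, norm_sub_rev xₐ xt₀]
  have h2s : (0:ℝ) < 2 * σ ^ 2 := by positivity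
  have key : ‖y - xₐ‖ ^ 2 - ‖xt₀ - xₐ‖ ^ 2
      > 2 * σ ^ 2 * (Real.log (p y) - Real.log (p xt₀)) := by
    rw [hid]; nlinarith [h1]
  have hdiv : Real.log (p y) - Real.log (p xt₀)
      < (‖y - xₐ‖ ^ 2 - ‖xt₀ - xₐ‖ ^ 2) / (2 * σ ^ 2) :=
    (lt_div_iff₀ h2s).mpr (by linarith)
  rw [sub_div] at hdiv
  have e1 : φ y = Real.exp (Real.log (p y) + -‖y - xₐ‖ ^ 2 / (2 * σ ^ 2)) := by
    rw [hφ, Real.exp_add, Real.exp_log hpy]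
  have e2 : φ xt₀ = Real.exp (Real.log (p xt₀) + -‖xt₀ - xₐ‖ ^ 2 / (2 * σ ^ 2)) := by
    rw [hφ, Real.exp_add, Real.exp_log hpt]
  have hfin : φ y < φ xt₀ := by
    rw [e1, e2]
    apply Real.exp_lt_exp.mpr
    have ha : -‖y - xₐ‖ ^ 2 / (2 * σ ^ 2) = -(‖y - xₐ‖ ^ 2 / (2 * σ ^ 2)) := by ring
    have hb : -‖xt₀ - xₐ‖ ^ 2 / (2 * σ ^ 2) = -(‖xt₀ - xₐ‖ ^ 2 / (2 * σ ^ 2)) := by ring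
    rw [ha, hb]; linarith
  linarith
end
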